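/- Let 𝕀 be a nonempty bounded connected open subset of ℝⁿ such that ℝⁿ ∖ cl 𝕀 is connected and cl 𝕀 ⊆ Q. Let u : cl 𝕊[𝕀]⁻ → ℝ be continuous, q-periodic, twice continuously differentiable on 𝕊[𝕀]⁻, and harmonic on 𝕊[𝕀]⁻. Then the maximum and minimum of u over cl 𝕊[𝕀]⁻ are attained on the boundary ∂𝕀: max_{cl 𝕊[𝕀]⁻} u = max_{∂𝕀} u and min_{cl 𝕊[𝕀]⁻} u = min_{∂𝕀} u. -/

import Mathlib

/-!
By periodicity, `u` attains its maximum `M` over `cl 𝕊[𝕀]⁻`: every point is a lattice translate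
of a point of the compact closed cell. By the strong maximum principle, proved with Hopf's barrier
`exp (-α ‖x - y‖²)`, the set `{u = M}` is open in the open set `𝕊[𝕀]⁻`. It is also relatively
closed, so since `ℝⁿ` is connected and `𝕊[𝕀]⁻ ≠ ℝⁿ` its closure reaches a point of `∂𝕊[𝕀]⁻`,
which is a lattice translate of a point of `∂𝕀`. The minimum is the maximum of `-u`.
-/

open MeasureTheory Real
open scoped BigOperators

noncomputable section

/-- The point `q z` of the lattice `q ℤⁿ`. -/
def latticePt (n : ℕ) (qd : Fin n → ℝ) (z : Fin n → ℤ) : EuclideanSpace ℝ (Fin n) :=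
  WithLp.toLp 2 (fun j => qd j * (z j : ℝ))

/-- The fundamental periodicity cell `Q = ∏_j (0, q_{jj})`. -/
def cellQ (n : ℕ) (qd : Fin n → ℝ) : Set (EuclideanSpace ℝ (Fin n)) :=
  {x | ∀ j, x j ∈ Set.Ioo 0 (qd j)}

/-- The periodically perforated domain `𝕊[𝕀]⁻ = ℝⁿ ∖ ⋃_{z ∈ ℤⁿ} cl(qz + 𝕀)`. -/
def perfDom (n : ℕ) (qd : Fin n → ℝ) (I : Set (EuclideanSpace ℝ (Fin n))) :
    Set (EuclideanSpace ℝ (Fin n)) :=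
  (⋃ z : Fin n → ℤ, closure ((latticePt n qd z + ·) '' I))ᶜ

/-- The Laplacian `Δu(x) = ∑_j ∂²u/∂x_j²(x)`. -/
def laplacian (n : ℕ) (u : EuclideanSpace ℝ (Fin n) → ℝ) (x : EuclideanSpace ℝ (Fin n)) : ℝ :=
  ∑ j : Fin n,
    fderiv ℝ (fun y => fderiv ℝ u y (EuclideanSpace.single j (1 : ℝ))) x
      (EuclideanSpace.single j (1 : ℝ))

open Filter Set Metric
open scoped Topology

theorem IsLocalMax.deriv_deriv_nonpos {f : ℝ → ℝ} {x₀ : ℝ} (hmax : IsLocalMax f x₀)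
    (hc : ContinuousAt f x₀) : deriv (deriv f) x₀ ≤ 0 := by
  by_contra! hpos
  have hmin := isLocalMin_of_deriv_deriv_pos hpos hmax.deriv_eq_zero hc
  have hconst : f =ᶠ[𝓝 x₀] fun _ => f x₀ :=
    (hmax.and hmin).mono fun x hx => le_antisymm hx.1 hx.2
  have hderiv : deriv f =ᶠ[𝓝 x₀] fun _ => 0 :=
    hconst.eventually_nhds.mono fun x hx => by rw [Filter.EventuallyEq.deriv_eq hx, deriv_const]
  rw [hderiv.deriv_eq, deriv_const] at hpos
  exact hpos.false

section Calculus

variable {E : Type*} [NormedAddCommGroup E] [NormedSpace ℝ E]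

theorem ContDiffAt.differentiableAt_fderiv_apply {f : E → ℝ} {x : E} (hf : ContDiffAt ℝ 2 f x)
    (v : E) : DifferentiableAt ℝ (fun y => fderiv ℝ f y v) x :=
  ((hf.fderiv_right (m := 1) le_rfl).differentiableAt one_ne_zero).clm_apply
    (differentiableAt_const v)

theorem IsLocalMax.fderiv_fderiv_apply_nonpos {f : E → ℝ} {p : E} (hmax : IsLocalMax f p)
    (hf : ContDiffAt ℝ 2 f p) (v : E) : fderiv ℝ (fun y => fderiv ℝ f y v) p v ≤ 0 := by
  set ℓ : ℝ → E := fun t => p + t • v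
  have hℓ : ∀ t, HasDerivAt ℓ v t := fun t => by
    simpa only [one_smul] using ((hasDerivAt_id' t).smul_const v).const_add p
  have hℓ0 : ℓ 0 = p := by simp [ℓ]
  have hℓp : Tendsto ℓ (𝓝 0) (𝓝 p) := hℓ0 ▸ (hℓ 0).continuousAt.tendsto
  have hderiv : deriv (f ∘ ℓ) =ᶠ[𝓝 0] fun t => fderiv ℝ f (ℓ t) v :=
    hℓp.eventually (hf.eventually (by simp)) |>.mono fun t ht =>
      ((ht.differentiableAt (by simp)).hasFDerivAt.comp_hasDerivAt t (hℓ t)).deriv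
  have hderiv2 : HasDerivAt (fun t => fderiv ℝ f (ℓ t) v)
      (fderiv ℝ (fun y => fderiv ℝ f y v) p v) 0 := by
    have := hf.differentiableAt_fderiv_apply v
    rw [← hℓ0] at this ⊢
    exact this.hasFDerivAt.comp_hasDerivAt 0 (hℓ 0)
  have hcomp : IsLocalMax (f ∘ ℓ) 0 := (hℓ0 ▸ hmax).comp_continuous (hℓ 0).continuousAt
  rw [← hderiv2.deriv, ← hderiv.deriv_eq]
  exact hcomp.deriv_deriv_nonpos
    ((hℓ0 ▸ hf.continuousAt).comp (hℓ 0).continuousAt)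

end Calculus

section Gaussian

variable {E : Type*} [NormedAddCommGroup E] [InnerProductSpace ℝ E]

theorem hasFDerivAt_gaussian (a c α : ℝ) (y x : E) :
    HasFDerivAt (fun x => a * exp (-α * ‖x - y‖ ^ 2) - c)
      ((-2 * α * a * exp (-α * ‖x - y‖ ^ 2)) • innerSL ℝ (x - y)) x := by
  refine (((((hasFDerivAt_id x).sub_const y).norm_sq.const_mul (-α)).exp.const_mul a).sub_const
    c).congr_fderiv ?_
  ext v
  simp only [FunLike.coe_smul, Pi.smul_apply, ContinuousLinearMap.comp_apply, innerSL_apply_apply,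
    ContinuousLinearMap.id_apply, smul_eq_mul, two_smul, add_apply, id]
  ring

theorem fderiv_fderiv_gaussian_apply (a c α : ℝ) (y x v : E) :
    fderiv ℝ (fun x => fderiv ℝ (fun x => a * exp (-α * ‖x - y‖ ^ 2) - c) x v) x v =
      a * (4 * α ^ 2 * inner ℝ (x - y) v ^ 2 - 2 * α * ‖v‖ ^ 2) * exp (-α * ‖x - y‖ ^ 2) := by
  have hfd : (fun x => fderiv ℝ (fun x => a * exp (-α * ‖x - y‖ ^ 2) - c) x v) =
      fun x => (-2 * α) * ((a * exp (-α * ‖x - y‖ ^ 2) - 0) * inner ℝ (x - y) v) := by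
    funext x
    rw [(hasFDerivAt_gaussian a c α y x).fderiv]
    simp only [smul_apply, innerSL_apply_apply, smul_eq_mul]
    ring
  have hinner : HasFDerivAt (fun x => inner ℝ (x - y) v) (innerSL ℝ v) x :=
    ((innerSL ℝ v).hasFDerivAt.comp x ((hasFDerivAt_id x).sub_const y)).congr_of_eventuallyEq
      (Eventually.of_forall fun z => real_inner_comm v (z - y))
  rw [hfd, (((hasFDerivAt_gaussian a 0 α y x).fun_mul hinner).const_mul (-2 * α)).fderiv]
  simp only [FunLike.coe_smul, Pi.smul_apply, add_apply, innerSL_apply_apply, smul_eq_mul,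
    real_inner_self_eq_norm_sq]
  ring

end Gaussian

section HopfBarrier

variable {E : Type*} [NormedAddCommGroup E]

def hopfBarrier (y : E) (r α ε : ℝ) : E → ℝ :=
  fun x => ε * exp (-α * ‖x - y‖ ^ 2) - ε * exp (-α * r ^ 2)

variable {y x : E} {r α ε : ℝ}

theorem hopfBarrier_eq_zero (hx : x ∈ sphere y r) : hopfBarrier y r α ε x = 0 := by
  rw [hopfBarrier, ← dist_eq_norm, mem_sphere.1 hx, sub_self]

theorem hopfBarrier_nonpos (hε : 0 ≤ ε) (hα : 0 ≤ α) (hr : 0 ≤ r) (hx : r ≤ dist x y) :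
    hopfBarrier y r α ε x ≤ 0 := by
  have : exp (-α * ‖x - y‖ ^ 2) ≤ exp (-α * r ^ 2) := by
    rw [← dist_eq_norm]
    exact exp_le_exp.2 (by nlinarith [pow_le_pow_left₀ hr hx 2])
  rw [hopfBarrier, sub_nonpos]
  exact mul_le_mul_of_nonneg_left this hε

theorem hopfBarrier_le (hε : 0 ≤ ε) (hα : 0 ≤ α) : hopfBarrier y r α ε x ≤ ε := by
  have : exp (-α * ‖x - y‖ ^ 2) ≤ 1 := exp_le_one_iff.2 (by nlinarith [norm_nonneg (x - y)])
  rw [hopfBarrier]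
  nlinarith [exp_pos (-α * r ^ 2)]

theorem contDiff_hopfBarrier [InnerProductSpace ℝ E] {k : WithTop ℕ∞} :
    ContDiff ℝ k (hopfBarrier y r α ε) :=
  (contDiff_const.mul (contDiff_const.mul ((contDiff_id.sub contDiff_const).norm_sq ℝ)).exp).sub
    contDiff_const

end HopfBarrier

section Laplacian

variable {n : ℕ} {u v : EuclideanSpace ℝ (Fin n) → ℝ} {x : EuclideanSpace ℝ (Fin n)}

theorem laplacian_nonpos_of_isLocalMax (hmax : IsLocalMax u x) (hu : ContDiffAt ℝ 2 u x) :
    laplacian n u x ≤ 0 :=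
  Finset.sum_nonpos fun _ _ => hmax.fderiv_fderiv_apply_nonpos hu _

theorem laplacian_add (hu : ContDiffAt ℝ 2 u x) (hv : ContDiffAt ℝ 2 v x) :
    laplacian n (u + v) x = laplacian n u x + laplacian n v x := by
  rw [laplacian, laplacian, laplacian, ← Finset.sum_add_distrib]
  refine Finset.sum_congr rfl fun j _ => ?_
  set e := EuclideanSpace.single j (1 : ℝ)
  have hfd : (fun y => fderiv ℝ (u + v) y e) =ᶠ[𝓝 x]
      (fun y => fderiv ℝ u y e) + (fun y => fderiv ℝ v y e) := by
    filter_upwards [hu.eventually (by simp), hv.eventually (by simp)] with y huy hvy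
    rw [fderiv_add (huy.differentiableAt (by simp)) (hvy.differentiableAt (by simp))]
    rfl
  rw [hfd.fderiv_eq, fderiv_add (hu.differentiableAt_fderiv_apply e)
    (hv.differentiableAt_fderiv_apply e)]
  rfl

theorem laplacian_neg : laplacian n (fun y => -u y) x = -laplacian n u x := by
  simp only [laplacian, fderiv_fun_neg, neg_apply, ← Finset.sum_neg_distrib]

theorem laplacian_gaussian (a c α : ℝ) (y : EuclideanSpace ℝ (Fin n)) :
    laplacian n (fun x => a * exp (-α * ‖x - y‖ ^ 2) - c) x =
      a * (4 * α ^ 2 * ‖x - y‖ ^ 2 - 2 * n * α) * exp (-α * ‖x - y‖ ^ 2) := by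
  have hnorm : ∑ j, (x - y) j ^ 2 = ‖x - y‖ ^ 2 := by
    simp only [EuclideanSpace.norm_sq_eq, Real.norm_eq_abs, sq_abs]
  simp only [laplacian, fderiv_fderiv_gaussian_apply, EuclideanSpace.inner_single_right,
    PiLp.norm_single, norm_one, one_mul, conj_trivial, one_pow, mul_one]
  rw [← Finset.sum_mul, ← Finset.mul_sum, Finset.sum_sub_distrib, ← Finset.mul_sum, hnorm,
    Finset.sum_const, Finset.card_univ, Fintype.card_fin, nsmul_eq_mul]
  ring

end Laplacian

section MaximumPrinciple

variable {n : ℕ} {u : EuclideanSpace ℝ (Fin n) → ℝ}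

theorem laplacian_hopfBarrier_pos {x y : EuclideanSpace ℝ (Fin n)} {r α ε : ℝ} (hε : 0 < ε)
    (hα : 2 * n < α * r ^ 2) (hr : 0 ≤ r) (hx : r ≤ 2 * dist x y) :
    0 < laplacian n (hopfBarrier y r α ε) x := by
  unfold hopfBarrier
  rw [laplacian_gaussian]
  have hα₀ : 0 < α := by
    by_contra! h
    nlinarith [sq_nonneg r, (Nat.cast_nonneg n : (0 : ℝ) ≤ n)]
  have hr2 : r ^ 2 ≤ 4 * ‖x - y‖ ^ 2 := by rw [← dist_eq_norm]; nlinarith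
  have : 0 < 4 * α ^ 2 * ‖x - y‖ ^ 2 - 2 * n * α := by nlinarith
  positivity

theorem lt_of_mem_sphere_of_le_sub_on_closedBall {U : Set (EuclideanSpace ℝ (Fin n))}
    {M r δ : ℝ} {y p : EuclideanSpace ℝ (Fin n)} (hU : IsOpen U) (hu : ContDiffOn ℝ 2 u U)
    (hΔ : ∀ x ∈ U, 0 ≤ laplacian n u x) (hle : ∀ x ∈ U, u x ≤ M) (hr : 0 < r)
    (hball : closedBall y r ⊆ U) (hδ : 0 < δ) (hinner : ∀ x ∈ closedBall y (r / 2), u x ≤ M - δ)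
    (hp : p ∈ sphere y r) : u p < M := by
  by_contra! hpM
  -- The amplitude `δ / 2` keeps `w` below `M` on the inner sphere; `α` makes `Δβ > 0` on the
  -- annulus.
  set α := (2 * n + 1) / r ^ 2
  set β := hopfBarrier y r α (δ / 2)
  set w := u + β
  have hε : 0 < δ / 2 := half_pos hδ
  have hα : 2 * n < α * r ^ 2 := by rw [div_mul_cancel₀ _ (by positivity)]; linarith
  have hα₀ : 0 ≤ α := by positivity
  have hβ : ContDiff ℝ 2 β := contDiff_hopfBarrier
  have hwp : w p = M := by
    show u p + β p = M
    rw [show β p = 0 from hopfBarrier_eq_zero hp, add_zero]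
    exact le_antisymm (hle p (hball (sphere_subset_closedBall hp))) hpM
  set A := closedBall y r \ ball y (r / 2)
  have hAU : A ⊆ U := sdiff_subset.trans hball
  have hpA : p ∈ A := ⟨sphere_subset_closedBall hp, by
    rw [mem_ball, mem_sphere.1 hp, not_lt]; linarith⟩
  obtain ⟨m, hmA, hmmax⟩ := ((isCompact_closedBall y r).diff isOpen_ball).exists_isMaxOn
    ⟨p, hpA⟩ ((hu.add hβ.contDiffOn).continuousOn.mono hAU)
  have hMm : M ≤ w m := hwp ▸ hmmax hpA
  have hm : r / 2 < dist m y := by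
    by_contra! h
    have : w m ≤ M - δ + δ / 2 :=
      add_le_add (hinner m (mem_closedBall.2 h)) (hopfBarrier_le hε.le hα₀)
    linarith
  have hloc : IsLocalMax w m := by
    have hV : IsOpen (U ∩ {x | r / 2 < dist x y}) :=
      hU.inter (isOpen_lt continuous_const (continuous_id.dist continuous_const))
    filter_upwards [hV.mem_nhds ⟨hAU hmA, hm⟩] with x ⟨hxU, hx⟩
    by_cases hxr : dist x y ≤ r
    · exact hmmax ⟨mem_closedBall.2 hxr, by simpa using hx.le⟩
    · calc w x ≤ M + 0 :=
            add_le_add (hle x hxU) (hopfBarrier_nonpos hε.le hα₀ hr.le (not_le.1 hxr).le)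
        _ ≤ w m := by linarith
  have hum : ContDiffAt ℝ 2 u m := hu.contDiffAt (hU.mem_nhds (hAU hmA))
  have hΔw := laplacian_nonpos_of_isLocalMax hloc (hum.add hβ.contDiffAt)
  rw [laplacian_add hum hβ.contDiffAt] at hΔw
  linarith [hΔ m (hAU hmA), laplacian_hopfBarrier_pos hε hα hr.le (x := m) (y := y) (by linarith)]

theorem lt_of_mem_sphere_of_forall_lt_on_ball {U : Set (EuclideanSpace ℝ (Fin n))} {M r : ℝ}
    {y p : EuclideanSpace ℝ (Fin n)} (hU : IsOpen U) (hu : ContDiffOn ℝ 2 u U)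
    (hΔ : ∀ x ∈ U, 0 ≤ laplacian n u x) (hle : ∀ x ∈ U, u x ≤ M) (hr : 0 < r)
    (hball : closedBall y r ⊆ U) (hlt : ∀ x ∈ ball y r, u x < M) (hp : p ∈ sphere y r) :
    u p < M := by
  have hinner : closedBall y (r / 2) ⊆ ball y r := closedBall_subset_ball (half_lt_self hr)
  obtain ⟨m₀, hm₀, hm₀max⟩ := (isCompact_closedBall y (r / 2)).exists_isMaxOn
    (nonempty_closedBall.2 (by positivity))
    (hu.continuousOn.mono (hinner.trans (ball_subset_closedBall.trans hball)))
  refine lt_of_mem_sphere_of_le_sub_on_closedBall hU hu hΔ hle hr hball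
    (sub_pos.2 (hlt m₀ (hinner hm₀))) (fun x hx => ?_) hp
  rw [sub_sub_cancel]
  exact hm₀max hx

theorem isOpen_setOf_eq_of_laplacian_nonneg {U : Set (EuclideanSpace ℝ (Fin n))} {M : ℝ}
    (hU : IsOpen U) (hu : ContDiffOn ℝ 2 u U) (hΔ : ∀ x ∈ U, 0 ≤ laplacian n u x)
    (hle : ∀ x ∈ U, u x ≤ M) : IsOpen {x ∈ U | u x = M} := by
  rw [Metric.isOpen_iff]
  rintro p ⟨hpU, hpM⟩
  obtain ⟨R, hR, hRU⟩ := nhds_basis_closedBall.mem_iff.1 (hU.mem_nhds hpU)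
  refine ⟨R / 2, by positivity, fun x hx => ?_⟩
  have hxp : dist x p < R / 2 := hx
  have hxU : x ∈ U := hRU (mem_closedBall.2 (by linarith))
  refine ⟨hxU, ?_⟩
  by_contra hxM
  -- The point of the maximum set closest to `x` lies on a sphere around `x` enclosing no such point
  set F := closedBall p R ∩ u ⁻¹' {M}
  have hF : IsCompact F := (isCompact_closedBall p R).of_isClosed_subset
    ((hu.continuousOn.mono hRU).preimage_isClosed_of_isClosed isClosed_closedBall
      isClosed_singleton) inter_subset_left
  obtain ⟨p', hp'F, hp'min⟩ := hF.exists_isMinOn (f := fun y => dist y x)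
    ⟨p, mem_closedBall_self hR.le, hpM⟩ (by fun_prop)
  have hp'x : dist p' x ≤ dist p x := hp'min ⟨mem_closedBall_self hR.le, hpM⟩
  have hr : 0 < dist p' x := dist_pos.2 fun h => hxM (h ▸ hp'F.2)
  have hball : closedBall x (dist p' x) ⊆ closedBall p R := fun y hy => by
    have := dist_triangle y x p
    rw [mem_closedBall] at hy ⊢
    rw [dist_comm p x] at hp'x
    linarith
  have hlt : ∀ y ∈ ball x (dist p' x), u y < M := fun y hy =>
    (hle y (hRU (hball (ball_subset_closedBall hy)))).lt_of_ne fun hyM =>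
      (mem_ball.1 hy).not_ge (hp'min ⟨hball (ball_subset_closedBall hy), hyM⟩)
  exact (lt_of_mem_sphere_of_forall_lt_on_ball hU hu hΔ hle hr (hball.trans hRU) hlt
    (mem_sphere.2 rfl)).ne hp'F.2

theorem exists_mem_frontier_isMaxOn_of_laplacian_nonneg {U : Set (EuclideanSpace ℝ (Fin n))}
    (hU : IsOpen U) (hUne : U ≠ univ) (hu : ContinuousOn u (closure U))
    (hu2 : ContDiffOn ℝ 2 u U) (hΔ : ∀ x ∈ U, 0 ≤ laplacian n u x)
    {x₀ : EuclideanSpace ℝ (Fin n)} (hx₀ : x₀ ∈ closure U) (hmax : IsMaxOn u (closure U) x₀) :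
    ∃ b ∈ frontier U, IsMaxOn u (closure U) b := by
  rw [hU.frontier_eq]
  by_cases hx₀U : x₀ ∈ U
  swap
  · exact ⟨x₀, ⟨hx₀, hx₀U⟩, hmax⟩
  set A := {x ∈ U | u x = u x₀}
  have hA : IsOpen A := isOpen_setOf_eq_of_laplacian_nonneg hU hu2 hΔ fun x hx =>
    hmax (subset_closure hx)
  have hA_not_closed : ¬ IsClosed A := fun hA' => by
    rcases isClopen_iff.1 ⟨hA', hA⟩ with h | h
    · exact h.subset ⟨hx₀U, rfl⟩
    · exact hUne (eq_univ_of_univ_subset (h ▸ fun x hx => hx.1))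
  obtain ⟨b, hbA, hbnA⟩ : ∃ b ∈ closure A, b ∉ A := by
    by_contra! h
    exact hA_not_closed (closure_subset_iff_isClosed.1 h)
  have hb : b ∈ closure U ∩ u ⁻¹' {u x₀} :=
    closure_minimal (t := closure U ∩ u ⁻¹' {u x₀}) (fun x hx => ⟨subset_closure hx.1, hx.2⟩)
      (hu.preimage_isClosed_of_isClosed isClosed_closure isClosed_singleton) hbA
  have hub : u b = u x₀ := hb.2
  exact ⟨b, ⟨hb.1, fun hbU => hbnA ⟨hbU, hub⟩⟩, fun x hx => hub ▸ hmax hx⟩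

end MaximumPrinciple

theorem forall_add_eq_of_forall_add_single {ι E α : Type*} [Fintype ι] [DecidableEq ι]
    [AddCommGroup E] {S : Set E} {f : E → α} (φ : (ι → ℤ) →+ E)
    (hS : ∀ z, ∀ x ∈ S, x + φ z ∈ S) (hf : ∀ x ∈ S, ∀ i, f (x + φ (Pi.single i 1)) = f x)
    (z : ι → ℤ) : ∀ x ∈ S, f (x + φ z) = f x := by
  let periods : AddSubgroup (ι → ℤ) :=
    { carrier := {z | ∀ x ∈ S, f (x + φ z) = f x}
      add_mem' := fun {a b} ha hb x hx => by
        rw [map_add, ← add_assoc, hb _ (hS a x hx), ha x hx]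
      zero_mem' := fun x _ => by rw [map_zero, add_zero]
      neg_mem' := fun {a} ha x hx => by
        have := ha _ (hS (-a) x hx)
        rw [map_neg] at this ⊢
        rwa [neg_add_cancel_right, eq_comm] at this }
  have hz : z ∈ periods := by
    rw [← Finset.univ_sum_single z]
    refine periods.sum_mem fun i _ => ?_
    rw [← mul_one (z i), ← smul_eq_mul, Pi.single_smul]
    exact periods.zsmul_mem (fun x hx => hf x hx i) _
  exact hz

section Lattice

variable {n : ℕ} {qd : Fin n → ℝ} {I : Set (EuclideanSpace ℝ (Fin n))}

@[simp]
theorem latticePt_apply (z : Fin n → ℤ) (j : Fin n) : latticePt n qd z j = qd j * z j := rfl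

def latticeHom (n : ℕ) (qd : Fin n → ℝ) : (Fin n → ℤ) →+ EuclideanSpace ℝ (Fin n) where
  toFun := latticePt n qd
  map_zero' := by ext; simp
  map_add' z z' := by ext; simp; ring

@[simp]
theorem latticeHom_apply (z : Fin n → ℤ) : latticeHom n qd z = latticePt n qd z := rfl

@[simp]
theorem latticePt_zero : latticePt n qd 0 = 0 :=
  map_zero (latticeHom n qd)

theorem latticePt_add (z z' : Fin n → ℤ) :
    latticePt n qd (z + z') = latticePt n qd z + latticePt n qd z' :=
  map_add (latticeHom n qd) z z'

theorem latticePt_neg (z : Fin n → ℤ) : latticePt n qd (-z) = -latticePt n qd z :=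
  map_neg (latticeHom n qd) z

theorem latticePt_single (j : Fin n) :
    latticePt n qd (Pi.single j 1) = EuclideanSpace.single j (qd j) := by
  ext k
  by_cases h : k = j
  · subst h; simp
  · simp [h]

theorem mem_closure_latticePt_add_image_iff {x : EuclideanSpace ℝ (Fin n)} (z : Fin n → ℤ) :
    x ∈ closure ((latticePt n qd z + ·) '' I) ↔ x - latticePt n qd z ∈ closure I := by
  rw [← Homeomorph.coe_addLeft, ← (Homeomorph.addLeft _).image_closure, Homeomorph.coe_addLeft,
    image_add_left, mem_preimage, neg_add_eq_sub]

theorem mem_perfDom_iff {x : EuclideanSpace ℝ (Fin n)} :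
    x ∈ perfDom n qd I ↔ ∀ z, x - latticePt n qd z ∉ closure I := by
  simp only [perfDom, mem_compl_iff, mem_iUnion, not_exists, mem_closure_latticePt_add_image_iff]

theorem add_latticePt_mem_perfDom_iff {x : EuclideanSpace ℝ (Fin n)} (z : Fin n → ℤ) :
    x + latticePt n qd z ∈ perfDom n qd I ↔ x ∈ perfDom n qd I := by
  rw [mem_perfDom_iff, mem_perfDom_iff, ← (Equiv.addRight z).forall_congr_right]
  simp only [Equiv.coe_addRight, latticePt_add, add_sub_add_right_eq_sub]

theorem add_latticePt_mem_closure_perfDom {x : EuclideanSpace ℝ (Fin n)}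
    (hx : x ∈ closure (perfDom n qd I)) (z : Fin n → ℤ) :
    x + latticePt n qd z ∈ closure (perfDom n qd I) :=
  map_mem_closure (f := (· + latticePt n qd z)) (continuous_add_const _) hx
    fun _ hy => (add_latticePt_mem_perfDom_iff z).2 hy

theorem locallyFinite_closure_latticePt_add_image (hqd : ∀ j, 0 < qd j)
    (hIQ : closure I ⊆ cellQ n qd) :
    LocallyFinite fun z => closure ((latticePt n qd z + ·) '' I) := by
  intro x
  refine ⟨ball x 1, ball_mem_nhds x one_pos, (Set.finite_Icc (fun j => ⌊(x j - 1) / qd j⌋)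
    (fun j => ⌊(x j + 1) / qd j⌋)).subset ?_⟩
  rintro z ⟨y, hyI, hyx⟩
  have hcell := hIQ ((mem_closure_latticePt_add_image_iff z).1 hyI)
  have hz : ∀ j, x j - 1 < (z j + 1) * qd j ∧ z j * qd j ≤ x j + 1 := fun j => by
    have hyxj : |y j - x j| < 1 := by
      simpa only [PiLp.sub_apply, Real.norm_eq_abs] using
        (PiLp.norm_apply_le (y - x) j).trans_lt (mem_ball_iff_norm.1 hyx)
    obtain ⟨h0, hq⟩ := hcell j
    simp only [PiLp.sub_apply, latticePt_apply] at h0 hq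
    constructor <;> linarith [abs_lt.1 hyxj]
  exact ⟨fun j => Int.floor_le_iff.2 ((div_lt_iff₀ (hqd j)).2 (by push_cast; exact (hz j).1)),
    fun j => Int.le_floor.2 ((le_div_iff₀ (hqd j)).2 (hz j).2)⟩

theorem isOpen_perfDom (hqd : ∀ j, 0 < qd j) (hIQ : closure I ⊆ cellQ n qd) :
    IsOpen (perfDom n qd I) :=
  ((locallyFinite_closure_latticePt_add_image hqd hIQ).isClosed_iUnion
    fun _ => isClosed_closure).isOpen_compl

theorem zero_mem_perfDom (hIQ : closure I ⊆ cellQ n qd) (j : Fin n) :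
    0 ∈ perfDom n qd I := by
  refine mem_perfDom_iff.2 fun z hz => ?_
  obtain ⟨h0, hq⟩ := hIQ hz j
  simp only [zero_sub, PiLp.neg_apply, latticePt_apply] at h0 hq
  have hneg : z j < 0 := by
    have : (z j : ℝ) < 0 := by nlinarith
    exact_mod_cast this
  have : (z j : ℝ) ≤ -1 := by exact_mod_cast (show z j ≤ -1 by omega)
  nlinarith

end Lattice

section Periodic

variable {n : ℕ} {qd : Fin n → ℝ} {I : Set (EuclideanSpace ℝ (Fin n))}

theorem exists_add_latticePt_mem_Icc (hqd : ∀ j, 0 < qd j) (x : EuclideanSpace ℝ (Fin n)) :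
    ∃ z, (x + latticePt n qd z).ofLp ∈ Icc 0 qd := by
  suffices h : ∃ z, ∀ j, (x + latticePt n qd z) j ∈ Icc 0 (qd j) by
    obtain ⟨z, hz⟩ := h
    exact ⟨z, fun j => (hz j).1, fun j => (hz j).2⟩
  refine ⟨fun j => -⌊x j / qd j⌋, fun j => ?_⟩
  have hfract : (x + latticePt n qd fun j => -⌊x j / qd j⌋) j = qd j * Int.fract (x j / qd j) := by
    simp only [PiLp.add_apply, latticePt_apply, Int.cast_neg, Int.fract]
    field_simp [(hqd j).ne']
    ring
  rw [hfract]
  exact ⟨mul_nonneg (hqd j).le (Int.fract_nonneg _),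
    by nlinarith [Int.fract_lt_one (x j / qd j), hqd j]⟩

theorem exists_isMaxOn_of_latticePt_periodic {S : Set (EuclideanSpace ℝ (Fin n))}
    {f : EuclideanSpace ℝ (Fin n) → ℝ} (hqd : ∀ j, 0 < qd j) (hS : IsClosed S) (hne : S.Nonempty)
    (hSper : ∀ z, ∀ x ∈ S, x + latticePt n qd z ∈ S) (hf : ContinuousOn f S)
    (hfper : ∀ z, ∀ x ∈ S, f (x + latticePt n qd z) = f x) : ∃ x ∈ S, IsMaxOn f S x := by
  set B : Set (EuclideanSpace ℝ (Fin n)) := WithLp.ofLp ⁻¹' Icc 0 qd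
  have hB : IsCompact B := (PiLp.homeomorph 2 _).isCompact_preimage.2 isCompact_Icc
  have hSB : (S ∩ B).Nonempty := by
    obtain ⟨x, hx⟩ := hne
    obtain ⟨z, hz⟩ := exists_add_latticePt_mem_Icc hqd x
    exact ⟨_, hSper z x hx, hz⟩
  obtain ⟨xs, hxs, hmax⟩ := (hB.inter_left hS).exists_isMaxOn
    hSB (hf.mono inter_subset_left)
  refine ⟨xs, hxs.1, fun x hx => ?_⟩
  obtain ⟨z, hz⟩ := exists_add_latticePt_mem_Icc hqd x
  show f x ≤ f xs
  rw [← hfper z x hx]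
  exact hmax ⟨hSper z x hx, hz⟩

theorem exists_sub_latticePt_mem_frontier {b : EuclideanSpace ℝ (Fin n)}
    (hb : b ∈ closure (perfDom n qd I)) (hbD : b ∉ perfDom n qd I) :
    ∃ z, b - latticePt n qd z ∈ frontier I := by
  obtain ⟨z, hz⟩ : ∃ z, b - latticePt n qd z ∈ closure I := by
    simpa [mem_perfDom_iff] using hbD
  refine ⟨z, hz, fun hint => ?_⟩
  obtain ⟨x, hxI, hxD⟩ := mem_closure_iff.1 hb _
    (isOpen_interior.preimage (continuous_sub_right (latticePt n qd z))) hint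
  exact mem_perfDom_iff.1 hxD z (subset_closure (interior_subset hxI))

theorem exists_mem_frontier_isMaxOn_closure_perfDom {u : EuclideanSpace ℝ (Fin n) → ℝ}
    (hn : n ≠ 0) (hqd : ∀ j, 0 < qd j) (hIne : I.Nonempty) (hIQ : closure I ⊆ cellQ n qd)
    (hu : ContinuousOn u (closure (perfDom n qd I)))
    (hper : ∀ z, ∀ x ∈ closure (perfDom n qd I), u (x + latticePt n qd z) = u x)
    (hC2 : ContDiffOn ℝ 2 u (perfDom n qd I))
    (hΔ : ∀ x ∈ perfDom n qd I, 0 ≤ laplacian n u x) :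
    ∃ x₀ ∈ frontier I, IsMaxOn u (closure (perfDom n qd I)) x₀ := by
  have hD := isOpen_perfDom hqd hIQ
  have hD_ne_univ : perfDom n qd I ≠ univ := fun h => by
    obtain ⟨i, hi⟩ := hIne
    exact mem_perfDom_iff.1 (h ▸ mem_univ i) 0 (by simpa using subset_closure hi)
  obtain ⟨xs, hxs, hmax⟩ := exists_isMaxOn_of_latticePt_periodic hqd isClosed_closure
    ⟨0, subset_closure (zero_mem_perfDom hIQ ⟨0, Nat.pos_of_ne_zero hn⟩)⟩
    (fun z x hx => add_latticePt_mem_closure_perfDom hx z) hu hper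
  obtain ⟨b, hb, hbmax⟩ :=
    exists_mem_frontier_isMaxOn_of_laplacian_nonneg hD hD_ne_univ hu hC2 hΔ hxs hmax
  rw [hD.frontier_eq] at hb
  obtain ⟨z, hz⟩ := exists_sub_latticePt_mem_frontier hb.1 hb.2
  refine ⟨_, hz, fun x hx => ?_⟩
  show u x ≤ u (b - latticePt n qd z)
  rw [sub_eq_add_neg, ← latticePt_neg, hper (-z) b hb.1]
  exact hbmax hx

end Periodic

theorem periodic_maximum_principle_boundary_general
    (n : ℕ) (hn : 2 ≤ n) (qd : Fin n → ℝ) (hqd : ∀ j, 0 < qd j)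
    (I : Set (EuclideanSpace ℝ (Fin n)))
    (hIne : I.Nonempty)
    (hIQ : closure I ⊆ cellQ n qd)
    (u : EuclideanSpace ℝ (Fin n) → ℝ)
    (hu : ContinuousOn u (closure (perfDom n qd I)))
    (hper : ∀ x ∈ closure (perfDom n qd I), ∀ j : Fin n,
      u (x + EuclideanSpace.single j (qd j)) = u x)
    (hC2 : ContDiffOn ℝ 2 u (perfDom n qd I))
    (hharm : ∀ x ∈ perfDom n qd I, laplacian n u x = 0) :
    (∃ x₀ ∈ frontier I, ∀ x ∈ closure (perfDom n qd I), u x ≤ u x₀) ∧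
    (∃ x₁ ∈ frontier I, ∀ x ∈ closure (perfDom n qd I), u x₁ ≤ u x) := by
  have hperZ : ∀ z, ∀ x ∈ closure (perfDom n qd I), u (x + latticePt n qd z) = u x :=
    forall_add_eq_of_forall_add_single (latticeHom n qd)
      (fun z x hx => add_latticePt_mem_closure_perfDom hx z)
      (fun x hx j => by rw [latticeHom_apply, latticePt_single]; exact hper x hx j)
  have hn0 : n ≠ 0 := by omega
  obtain ⟨x₀, hx₀, hmax⟩ := exists_mem_frontier_isMaxOn_closure_perfDom hn0 hqd hIne hIQ hu hperZ
    hC2 fun x hx => (hharm x hx).ge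
  obtain ⟨x₁, hx₁, hmin⟩ := exists_mem_frontier_isMaxOn_closure_perfDom (u := fun y => -u y)
    hn0 hqd hIne hIQ hu.neg (fun z x hx => by simp only [hperZ z x hx]) hC2.neg
    fun x hx => by rw [laplacian_neg, hharm x hx, neg_zero]
  exact ⟨⟨x₀, hx₀, hmax⟩, ⟨x₁, hx₁, fun x hx => neg_le_neg_iff.1 (hmin hx)⟩⟩

/-- A continuous `q`-periodic function, harmonic in `𝕊[𝕀]⁻`, attains its maximum and its
minimum over `cl 𝕊[𝕀]⁻` on the boundary `∂𝕀`. -/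
theorem periodic_maximum_principle_boundary
    (n : ℕ) (hn : 2 ≤ n) (qd : Fin n → ℝ) (hqd : ∀ j, 0 < qd j)
    (I : Set (EuclideanSpace ℝ (Fin n)))
    (hIne : I.Nonempty) (hIo : IsOpen I) (hIb : Bornology.IsBounded I)
    (hIconn : IsConnected I) (hIext : IsConnected (closure I)ᶜ)
    (hIQ : closure I ⊆ cellQ n qd)
    (u : EuclideanSpace ℝ (Fin n) → ℝ)
    (hu : ContinuousOn u (closure (perfDom n qd I)))
    (hper : ∀ x ∈ closure (perfDom n qd I), ∀ j : Fin n,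
      u (x + EuclideanSpace.single j (qd j)) = u x)
    (hC2 : ContDiffOn ℝ 2 u (perfDom n qd I))
    (hharm : ∀ x ∈ perfDom n qd I, laplacian n u x = 0) :
    (∃ x₀ ∈ frontier I, ∀ x ∈ closure (perfDom n qd I), u x ≤ u x₀) ∧
    (∃ x₁ ∈ frontier I, ∀ x ∈ closure (perfDom n qd I), u x₁ ≤ u x) :=
  periodic_maximum_principle_boundary_general n hn qd hqd I hIne hIQ u hu hper hC2 hharm
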